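/- arXiv:1508.04619 — 2 statements merged into one kernel-verified Lean document; each statement's English description precedes it below -/
import Mathlib

section
/- For every n ≥ 2, the set of lecture hall partitions in ℤ^n, viewed as an additive submonoid of ℤ^n, is generated by the set H_n = {v_A : A ⊆ {1, …, n−1}}; that is, every lecture hall partition is a finite sum (equivalently, a nonnegative integer combination) of the vectors v_A. -/
/-- A lecture hall partition of length `n`: a vector `λ ∈ ℤⁿ` (indexed `0,…,n-1`,
corresponding to `λ_1,…,λ_n`) with `0 ≤ λ_1` and `i·λ_{i+1} ≥ (i+1)·λ_i` for `1 ≤ i ≤ n-1`. -/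
def IsLectureHall (n : ℕ) (l : Fin n → ℤ) : Prop :=
  (∀ h : 0 < n, 0 ≤ l ⟨0, h⟩) ∧
  ∀ i : ℕ, ∀ h : i + 1 < n,
    ((i : ℤ) + 1) * l ⟨i + 1, h⟩ ≥ ((i : ℤ) + 2) * l ⟨i, by omega⟩

/-- For a subset `A = {i_1 < i_2 < ⋯ < i_k} ⊆ {1,…,n-1}`, the vector
`v_A = (0,…,0, i_1, i_2, …, i_k, i_k + 1) ∈ ℤⁿ`: `n - k - 1` leading zeros, then the
elements of `A` in increasing order, and finally `max(A) + 1` (with `v_∅ = (0,…,0,1)`). -/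
def vA (n : ℕ) (A : Finset ℕ) : Fin n → ℤ := fun j =>
  if (j : ℕ) = n - 1 then ((A.sort (· ≤ ·)).getLastD 0 : ℤ) + 1
  else if n - 1 - A.card ≤ (j : ℕ) then
    (((A.sort (· ≤ ·)).getD ((j : ℕ) - (n - 1 - A.card)) 0 : ℕ) : ℤ)
  else 0


/-!
Both sides are additive monoids: sums of lecture hall partitions are lecture hall partitions.
The vectors `v_A` are exactly the nonnegative `w ∈ ℤⁿ` with `w_j < w_{j+1}` whenever `0 < w_j`
and `j + 1 < n`, `w_{n-1} ≤ n - 1` and `w_n = w_{n-1} + 1`; such a `w` is a lecture hall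
partition.

Conversely, let `λ` be a lecture hall partition with `λ_n > 0`, and put
`s = λ_n - λ_{n-1} - 1 ≥ 0` and `ρ = (1, 2, …, n)`. As `ρ` satisfies every defining inequality
with equality, `w = max(λ - sρ, e_n)` (coordinatewise) is some `v_A`, and
`λ - w = min(sρ, λ - e_n)` is again a lecture hall partition, with smaller last part. Induction
on `λ_n` concludes, since a lecture hall partition with `λ_n = 0` vanishes.
-/

theorem mul_min_le_mul_min {R : Type*} [Semiring R] [LinearOrder R] [PosMulMono R]
    {p q a b c d : R} (hp : 0 ≤ p) (hq : 0 ≤ q) (hac : p * a ≤ q * c) (hbd : p * b ≤ q * d) :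
    p * min a b ≤ q * min c d := by
  rw [mul_min_of_nonneg _ _ hp, mul_min_of_nonneg _ _ hq]
  exact min_le_min hac hbd

namespace IsLectureHall

variable {n : ℕ} {l : Fin n → ℤ}

theorem mul_le_mul_of_le (hl : IsLectureHall n l) {i j : ℕ} (hij : i ≤ j)
    (hj : j < n) : ((j : ℤ) + 1) * l ⟨i, by omega⟩ ≤ ((i : ℤ) + 1) * l ⟨j, hj⟩ := by
  induction j, hij using Nat.le_induction with
  | base => rfl
  | succ j hij ih =>
    have ih := ih (by omega)
    have hstep := hl.2 j hj
    have key : ((j : ℤ) + 1) * (((j : ℤ) + 2) * l ⟨i, by omega⟩) ≤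
        ((j : ℤ) + 1) * (((i : ℤ) + 1) * l ⟨j + 1, hj⟩) := by
      nlinarith [mul_le_mul_of_nonneg_left ih (by positivity : (0 : ℤ) ≤ j + 2),
        mul_le_mul_of_nonneg_left hstep (by positivity : (0 : ℤ) ≤ i + 1)]
    push_cast
    linarith [le_of_mul_le_mul_left key (by positivity)]

theorem nonneg (hl : IsLectureHall n l) (j : Fin n) : 0 ≤ l j := by
  have h := hl.mul_le_mul_of_le (Nat.zero_le j) j.2
  push_cast at h
  nlinarith [hl.1 j.pos]

theorem eq_zero_of_le (hl : IsLectureHall n l) {i j : Fin n} (hij : i ≤ j)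
    (hj : l j = 0) : l i = 0 := by
  have h := hl.mul_le_mul_of_le (Fin.le_def.1 hij) j.2
  simp only [Fin.eta, hj, mul_zero] at h
  nlinarith [hl.nonneg i]

end IsLectureHall

namespace LectureHall

open Finset

def lectureHallSubmonoid (n : ℕ) : AddSubmonoid (Fin n → ℤ) where
  carrier := {l | IsLectureHall n l}
  zero_mem' := ⟨fun _ => le_rfl, fun _ _ => by simp⟩
  add_mem' {a b} ha hb := by
    refine ⟨fun h => add_nonneg (ha.1 h) (hb.1 h), fun i h => ?_⟩
    simp only [Pi.add_apply, mul_add]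
    linarith [ha.2 i h, hb.2 i h]

/-- The set `H_n` of the paper. -/
def vASet (n : ℕ) : Set (Fin n → ℤ) :=
  {v | ∃ A : Finset ℕ, A ⊆ Finset.Icc 1 (n - 1) ∧ v = vA n A}

structure IsVA (m : ℕ) (w : Fin (m + 2) → ℤ) : Prop where
  nonneg : ∀ j, 0 ≤ w j
  lt_succ_of_pos : ∀ j (hj : j < m), 0 < w ⟨j, by omega⟩ → w ⟨j, by omega⟩ < w ⟨j + 1, by omega⟩
  penultimate_le : w ⟨m, by omega⟩ ≤ m + 1
  last_eq : w ⟨m + 1, by omega⟩ = w ⟨m, by omega⟩ + 1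

namespace IsVA

variable {m : ℕ} {w : Fin (m + 2) → ℤ}

theorem add_le_of_pos (hw : IsVA m w) {i j : ℕ} (hij : i ≤ j) (hj : j ≤ m)
    (hi : 0 < w ⟨i, by omega⟩) : w ⟨i, by omega⟩ + (j - i) ≤ w ⟨j, by omega⟩ := by
  induction j, hij using Nat.le_induction with
  | base => simp
  | succ j hij ih =>
    have ih := ih (by omega)
    have := hw.lt_succ_of_pos j (by omega) (by omega)
    push_cast
    omega

theorem isLectureHall (hw : IsVA m w) : IsLectureHall (m + 2) w := by
  refine ⟨fun _ => hw.nonneg _, fun i hi => ?_⟩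
  have hwi := hw.nonneg ⟨i, by omega⟩
  have hwi1 := hw.nonneg ⟨i + 1, hi⟩
  rcases Nat.lt_or_ge i m with him | him
  · rcases hwi.eq_or_lt with hzero | hpos
    · rw [← hzero]
      positivity
    · have hgap := hw.lt_succ_of_pos i him hpos
      have hbound := hw.add_le_of_pos him.le le_rfl hpos
      have := hw.penultimate_le
      nlinarith
  · obtain rfl : i = m := by omega
    have := hw.last_eq
    have := hw.penultimate_le
    nlinarith

end IsVA

section vA

variable {m : ℕ} (A : Finset ℕ)

theorem vA_apply_of_le {j : ℕ} (hj : j ≤ m) :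
    vA (m + 2) A ⟨j, by omega⟩ = if m + 1 - #A ≤ j then
      ((A.sort (· ≤ ·)).getD (j - (m + 1 - #A)) 0 : ℤ) else 0 := by
  simp [vA, show j ≠ m + 1 by omega]

theorem vA_apply_last :
    vA (m + 2) A ⟨m + 1, by omega⟩ = ((A.sort (· ≤ ·)).getLastD 0 : ℤ) + 1 := by
  simp [vA]

theorem isVA_vA (hA : A ⊆ Icc 1 (m + 1)) : IsVA m (vA (m + 2) A) := by
  have hlen : (A.sort (· ≤ ·)).length = #A := length_sort _
  have hcard : #A ≤ m + 1 := by simpa using card_le_card hA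
  have hle : ∀ t, (A.sort (· ≤ ·)).getD t 0 ≤ m + 1 := by
    intro t
    rw [List.getD_eq_getElem?_getD]
    cases h : (A.sort (· ≤ ·))[t]? with
    | none => simp
    | some x => exact (mem_Icc.1 (hA ((mem_sort _).1 (List.mem_of_getElem? h)))).2
  refine ⟨fun j => ?_, fun j hj hpos => ?_, ?_, ?_⟩
  · unfold vA
    split_ifs <;> positivity
  · rw [vA_apply_of_le A hj.le] at hpos ⊢
    rw [vA_apply_of_le A (by omega : j + 1 ≤ m)]
    split_ifs at hpos ⊢ with h1 h2 <;> try omega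
    rw [List.getD_eq_getElem _ _ (by omega), List.getD_eq_getElem _ _ (by omega)]
    exact_mod_cast (sortedLT_sort A).getElem_lt_getElem_of_lt (by omega)
  · rw [vA_apply_of_le A le_rfl]
    split_ifs
    · exact_mod_cast hle _
    · omega
  · rw [vA_apply_last, vA_apply_of_le A le_rfl, List.getLastD_eq_getLast?,
      List.getLast?_eq_getElem?, ← List.getD_eq_getElem?_getD, hlen]
    split_ifs with h
    · congr 3
      omega
    · obtain rfl : A = ∅ := card_eq_zero.1 (by omega)
      simp

end vA

namespace IsVA

variable {m : ℕ} {w : Fin (m + 2) → ℤ}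

theorem exists_threshold (hw : IsVA m w) :
    ∃ a ≤ m + 1, ∀ j (hj : j ≤ m), 0 < w ⟨j, by omega⟩ ↔ a ≤ j := by
  classical
  have hex : ∃ a, ∀ j (hj : j ≤ m), a ≤ j → 0 < w ⟨j, by omega⟩ :=
    ⟨m + 1, fun j hj h => absurd h (by omega)⟩
  refine ⟨Nat.find hex, Nat.find_min' hex fun j hj h => absurd h (by omega), fun j hj =>
    ⟨fun hj' => Nat.find_min' hex fun k hk hjk => ?_, Nat.find_spec hex j hj⟩⟩
  have := hw.add_le_of_pos hjk hk hj'
  omega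

theorem exists_eq_vA (hw : IsVA m w) : ∃ A ⊆ Icc 1 (m + 1), w = vA (m + 2) A := by
  obtain ⟨a, ha, hpos⟩ := hw.exists_threshold
  set L := List.ofFn fun t : Fin (m + 1 - a) => (w ⟨a + t, by omega⟩).toNat
  have hLget : ∀ t (ht : t < m + 1 - a), L.getD t 0 = (w ⟨a + t, by omega⟩).toNat := by
    intro t ht
    rw [List.getD_eq_getElem _ _ (by simpa [L])]
    simp [L]
  have hsorted : L.SortedLT := by
    rw [List.sortedLT_ofFn_iff]
    intro s t hst
    have hst : (s : ℕ) < t := hst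
    have ht := t.2
    have hs := (hpos (a + s) (by omega)).2 (by omega)
    have := hw.add_le_of_pos (i := a + s) (j := a + t) (by omega) (by omega) hs
    simp only
    omega
  have hsort : L.toFinset.sort (· ≤ ·) = L :=
    (List.toFinset_sort _ hsorted.nodup).2 hsorted.sortedLE.pairwise
  have hcard : #L.toFinset = m + 1 - a := by
    rw [← length_sort (· ≤ ·), hsort, List.length_ofFn]
  have hA : L.toFinset ⊆ Icc 1 (m + 1) := by
    intro x hx
    obtain ⟨t, rfl⟩ := (List.mem_ofFn' _ _).1 (List.mem_toFinset.1 hx)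
    have ht := t.2
    have h1 := (hpos (a + t) (by omega)).2 (by omega)
    have h2 := hw.add_le_of_pos (j := m) (by omega) le_rfl h1
    have h3 := hw.penultimate_le
    simp only [mem_Icc]
    omega
  have hagree : ∀ j (hj : j ≤ m), vA (m + 2) L.toFinset ⟨j, by omega⟩ = w ⟨j, by omega⟩ := by
    intro j hj
    rw [vA_apply_of_le _ hj, hsort, hcard, show m + 1 - (m + 1 - a) = a by omega]
    split_ifs with h
    · obtain ⟨t, rfl⟩ := Nat.exists_eq_add_of_le h
      rw [Nat.add_sub_cancel_left, hLget t (by omega), Int.toNat_of_nonneg (hw.nonneg _)]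
    · exact le_antisymm (hw.nonneg _) (not_lt.1 (mt (hpos j hj).1 h))
  refine ⟨L.toFinset, hA, funext fun ⟨j, hj⟩ => ?_⟩
  rcases Nat.lt_or_ge j (m + 1) with h | h
  · exact (hagree j (by omega)).symm
  · obtain rfl : j = m + 1 := by omega
    rw [hw.last_eq, (isVA_vA _ hA).last_eq, hagree m le_rfl]

end IsVA

theorem isVA_iff_mem_vASet {m : ℕ} {w : Fin (m + 2) → ℤ} : IsVA m w ↔ w ∈ vASet (m + 2) := by
  refine ⟨fun hw => hw.exists_eq_vA, ?_⟩
  rintro ⟨A, hA, rfl⟩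
  exact isVA_vA A hA

section Peel

variable {m : ℕ}

def excess (l : Fin (m + 2) → ℤ) : ℤ := l ⟨m + 1, by omega⟩ - l ⟨m, by omega⟩ - 1

def peel (l : Fin (m + 2) → ℤ) : Fin (m + 2) → ℤ := fun j =>
  max (l j - excess l * ((j : ℤ) + 1)) (if (j : ℕ) = m + 1 then 1 else 0)

theorem last_eq_add_excess (l : Fin (m + 2) → ℤ) :
    l ⟨m + 1, by omega⟩ = l ⟨m, by omega⟩ + excess l + 1 := by
  unfold excess
  ring

variable {l : Fin (m + 2) → ℤ}

theorem peel_apply_of_le {j : ℕ} (hj : j ≤ m) :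
    peel l ⟨j, by omega⟩ = max (l ⟨j, by omega⟩ - excess l * ((j : ℤ) + 1)) 0 := by
  simp [peel, show j ≠ m + 1 by omega]

theorem peel_apply_last :
    peel l ⟨m + 1, by omega⟩ = max (l ⟨m + 1, by omega⟩ - excess l * ((m : ℤ) + 2)) 1 := by
  simp only [peel]
  push_cast
  ring_nf

theorem excess_nonneg (hl : IsLectureHall (m + 2) l) (hpos : 0 < l ⟨m + 1, by omega⟩) :
    0 ≤ excess l := by
  have := hl.2 m (by omega)
  have := hl.nonneg ⟨m, by omega⟩
  unfold excess
  nlinarith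

theorem isVA_peel (hl : IsLectureHall (m + 2) l) : IsVA m (peel l) := by
  refine ⟨fun j => le_max_of_le_right (by split_ifs <;> norm_num), fun j hj hpos => ?_, ?_, ?_⟩
  · rw [peel_apply_of_le hj.le] at hpos ⊢
    rw [peel_apply_of_le (by omega : j + 1 ≤ m)]
    have hx : 0 < l ⟨j, by omega⟩ - excess l * ((j : ℤ) + 1) := by
      simpa using hpos
    rw [max_eq_left hx.le]
    have := hl.2 j (by omega)
    push_cast
    exact lt_max_of_lt_left (by nlinarith)
  · rw [peel_apply_of_le le_rfl]
    have := hl.2 m (by omega)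
    rw [last_eq_add_excess l] at this
    exact max_le (by nlinarith) (by positivity)
  · rw [peel_apply_last, peel_apply_of_le le_rfl, last_eq_add_excess l, ← max_add_add_right,
      zero_add]
    ring_nf

theorem isLectureHall_sub_peel (hl : IsLectureHall (m + 2) l)
    (hpos : 0 < l ⟨m + 1, by omega⟩) : IsLectureHall (m + 2) (l - peel l) := by
  have hs := excess_nonneg hl hpos
  have hmin : ∀ a x : ℤ, a - max (a - x) 0 = min x a := by
    intro a x
    omega
  refine ⟨fun _ => ?_, fun i hi => ?_⟩
  · simp only [Pi.sub_apply]
    rw [peel_apply_of_le (Nat.zero_le m), hmin]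
    exact le_min (by simpa using hs) (hl.1 _)
  · simp only [Pi.sub_apply]
    rcases Nat.lt_or_ge i m with him | him
    · rw [peel_apply_of_le (by omega : i + 1 ≤ m), peel_apply_of_le him.le, hmin, hmin]
      refine mul_min_le_mul_min (by positivity) (by positivity) (le_of_eq ?_) (hl.2 i hi)
      push_cast
      ring
    · obtain rfl : m = i := by omega
      rw [peel_apply_last, peel_apply_of_le le_rfl, last_eq_add_excess l]
      set x := l ⟨m, by omega⟩ - excess l * ((m : ℤ) + 1) with hx
      have hmax : max (x + 1) 1 = max x 0 + 1 := by rw [← max_add_add_right, zero_add]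
      rw [show l ⟨m, by omega⟩ + excess l + 1 - excess l * ((m : ℤ) + 2) = x + 1 by rw [hx]; ring,
        hmax]
      have := le_max_left x 0
      linarith

end Peel

theorem mem_closure_vASet {m : ℕ} {l : Fin (m + 2) → ℤ} (hl : IsLectureHall (m + 2) l) :
    l ∈ AddSubmonoid.closure (vASet (m + 2)) := by
  induction hN : (l ⟨m + 1, by omega⟩).toNat using Nat.strong_induction_on generalizing l with
  | _ N ih =>
  rcases (hl.nonneg ⟨m + 1, by omega⟩).eq_or_lt with hzero | hpos
  · obtain rfl : l = 0 := funext fun j => hl.eq_zero_of_le (Fin.le_last j) hzero.symm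
    exact zero_mem _
  · rw [← sub_add_cancel l (peel l)]
    refine add_mem (ih _ ?_ (isLectureHall_sub_peel hl hpos) rfl)
      (AddSubmonoid.subset_closure (isVA_iff_mem_vASet.1 (isVA_peel hl)))
    have := le_max_right (l ⟨m + 1, by omega⟩ - excess l * ((m : ℤ) + 2)) 1
    rw [Pi.sub_apply, peel_apply_last]
    omega

end LectureHall

/-- For every `n ≥ 2`, the additive monoid of lecture hall partitions in `ℤⁿ` is
generated by `H_n = {v_A : A ⊆ {1,…,n-1}}`: the additive submonoid of `ℤⁿ` generated by
`H_n` is exactly the set of lecture hall partitions. -/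
theorem lectureHall_monoid_generated_by_vA (n : ℕ) (hn : 2 ≤ n) :
    (AddSubmonoid.closure
        {v : Fin n → ℤ | ∃ A : Finset ℕ, A ⊆ Finset.Icc 1 (n - 1) ∧ v = vA n A} :
      Set (Fin n → ℤ)) = {l : Fin n → ℤ | IsLectureHall n l} := by
  obtain ⟨m, rfl⟩ : ∃ m, n = m + 2 := ⟨n - 2, by omega⟩
  suffices AddSubmonoid.closure (LectureHall.vASet (m + 2)) =
      LectureHall.lectureHallSubmonoid (m + 2) from congrArg SetLike.coe this
  refine le_antisymm (AddSubmonoid.closure_le.2 fun w hw => ?_)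
    fun l hl => LectureHall.mem_closure_vASet hl
  exact (LectureHall.isVA_iff_mem_vASet.2 hw).isLectureHall
end

section
/- For every n ≥ 1 and every integer t ≥ 1, the number of lecture hall partitions λ ∈ ℤ^n with ⌈λ_n / n⌉ = t equals (t+1)^n − t^n, and the only lecture hall partition with ⌈λ_n / n⌉ = 0 is λ = 0. (Equivalently, Σ_λ z^{⌈λ_n/n⌉}, summed over lecture hall partitions λ in ℤ^n, equals A_n(z)/(1−z)^n, where A_n is the n-th Eulerian polynomial.) -/
/-! ### Basic lemmas -/

lemma IsLectureHall.nonneg_s12 {n : ℕ} {l : Fin n → ℤ} (hl : IsLectureHall n l) :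
    ∀ i : ℕ, ∀ h : i < n, 0 ≤ l ⟨i, h⟩ := by
  intro i
  induction i with
  | zero => intro h; exact hl.1 h
  | succ i ih =>
    intro h
    have h2 := hl.2 i h
    have h3 := ih (by omega)
    nlinarith [Int.natCast_nonneg i]

lemma IsLectureHall.zero_of_last {n : ℕ} {l : Fin n → ℤ} (hn : 1 ≤ n)
    (hl : IsLectureHall n l) (h0 : l ⟨n - 1, by omega⟩ = 0) : l = 0 := by
  have key : ∀ j : ℕ, ∀ h : n - 1 - j < n, l ⟨n - 1 - j, h⟩ = 0 := by
    intro j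
    induction j with
    | zero => intro h; simpa using h0
    | succ j ih =>
      intro h
      by_cases hj : j < n - 1
      · have hi : (n - 1 - j - 1) + 1 < n := by omega
        have h2 := hl.2 (n - 1 - j - 1) hi
        have h3 : (⟨n - 1 - j - 1 + 1, hi⟩ : Fin n) = ⟨n - 1 - j, by omega⟩ := by
          apply Fin.ext; simp; omega
        rw [h3, ih (by omega)] at h2
        have h4 := hl.nonneg_s12 (n - 1 - j - 1) (by omega)
        have h5 : (⟨n - 1 - (j+1), h⟩ : Fin n) = ⟨n - 1 - j - 1, by omega⟩ := by
          apply Fin.ext; simp; omega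
        rw [h5]
        nlinarith [Int.natCast_nonneg (n - 1 - j - 1)]
      · have h5 : (⟨n - 1 - (j+1), h⟩ : Fin n) = ⟨n - 1 - j, by omega⟩ := by
          apply Fin.ext; simp; omega
        rw [h5]; exact ih (by omega)
  funext i
  have : l i = l ⟨n - 1 - (n - 1 - i.val), by omega⟩ := by
    congr 1; apply Fin.ext; simp; omega
  rw [this, key]; rfl

/-! ### The counting function and its algebra -/

def gcount (n m : ℕ) : ℕ :=
  ((m + n - 1) / n + 1) ^ (n - 1 - (n * ((m + n - 1) / n) - m)) *
    ((m + n - 1) / n) ^ (n * ((m + n - 1) / n) - m)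

lemma gcount_eq {n a b : ℕ} (hn : 1 ≤ n) (hb : b ≤ n - 1) (hba : b ≤ n * a) :
    gcount n (n * a - b) = (a + 1) ^ (n - 1 - b) * a ^ b := by
  have hdiv : (n * a - b + n - 1) / n = a := by
    have h1 : n * a - b + n - 1 = n * a + (n - 1 - b) := by omega
    rw [h1, Nat.mul_add_div (by omega)]
    have : (n - 1 - b) / n = 0 := Nat.div_eq_of_lt (by omega)
    omega
  unfold gcount
  rw [hdiv]
  congr 2 <;> omega

lemma gcount_eq' {n a b k : ℕ} (hn : 1 ≤ n) (hb : b + 1 ≤ n) (hk : k + b = n * a) :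
    gcount n k = (a + 1) ^ (n - 1 - b) * a ^ b := by
  have h1 : k = n * a - b := Nat.eq_sub_of_add_eq hk
  have h2 : b ≤ n * a := by
    calc b ≤ k + b := by omega
    _ = n * a := hk
  rw [h1]
  exact gcount_eq hn (by omega) h2

lemma gcount_sum {n : ℕ} (hn : 1 ≤ n) :
    ∀ M a b : ℕ, b ≤ n - 1 → b ≤ n * a → n * a - b = M →
      ∑ k ∈ Finset.range (M + 1), gcount n k = a ^ b * (a + 1) ^ (n - b) := by
  intro M
  induction M with
  | zero =>
    intro a b hb hba hM
    rcases Nat.eq_zero_or_pos a with ha | ha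
    · subst ha
      have hb0 : b = 0 := by omega
      subst hb0
      have h0 : gcount n 0 = 1 := by
        have := gcount_eq (n := n) (a := 0) (b := 0) hn (by omega) (by omega)
        simpa using this
      simp [Finset.sum_range_one, h0]
    · exfalso
      have := Nat.le_mul_of_pos_right n ha
      omega
  | succ M ih =>
    intro a b hb hba hM
    have ha : 1 ≤ a := by
      rcases Nat.eq_zero_or_pos a with rfl | ha
      · simp at hM
      · exact ha
    have hna : n ≤ n * a := Nat.le_mul_of_pos_right n ha
    rw [Finset.sum_range_succ]
    have hg : gcount n (M + 1) = (a + 1) ^ (n - 1 - b) * a ^ b := by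
      rw [← hM]
      exact gcount_eq hn hb hba
    rw [hg]
    by_cases hbn : b < n - 1
    · have hrec := ih a (b + 1) (by omega) (by omega) (by omega)
      rw [hrec]
      have hnb : n - b = (n - 1 - b) + 1 := by omega
      have hnb2 : n - (b + 1) = n - 1 - b := by omega
      rw [hnb, hnb2, pow_succ, pow_succ]
      ring
    · have hb' : b = n - 1 := by omega
      have hrec := ih (a - 1) 0 (by omega) (by omega) (by
        rw [Nat.mul_sub, Nat.mul_one]; omega)
      rw [hrec]
      have h1 : (a - 1) ^ 0 * (a - 1 + 1) ^ (n - 0) = a ^ n := by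
        rw [pow_zero, one_mul]; congr 1; omega
      rw [h1, hb']
      have h2 : n - 1 - (n - 1) = 0 := by omega
      have h3 : n - (n - 1) = 1 := by omega
      rw [h2, h3, pow_zero, one_mul, pow_one]
      have h5 : a ^ n = a ^ (n - 1) * a := by
        rw [← pow_succ]; congr 1; omega
      rw [h5]; ring

lemma gcount_sum' {n : ℕ} (hn : 1 ≤ n) {M a b : ℕ} (hb : b + 1 ≤ n) (hM : M + b = n * a) :
    ∑ k ∈ Finset.range (M + 1), gcount n k = a ^ b * (a + 1) ^ (n - b) := by
  have h2 : b ≤ n * a := by calc b ≤ M + b := by omega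
                             _ = n * a := hM
  exact gcount_sum hn M a b (by omega) h2 (by omega)

/-! ### Equivalences -/

lemma my_card_sigma {ι : Type*} [Fintype ι] (f : ι → Type*) [∀ i, Finite (f i)] :
    Nat.card (Σ i, f i) = ∑ i, Nat.card (f i) := by
  classical
  letI : ∀ i, Fintype (f i) := fun i => Fintype.ofFinite (f i)
  simp [Nat.card_eq_fintype_card, Fintype.card_sigma]

def baseEquiv (m : ℕ) :
    {l : Fin 1 → ℤ // IsLectureHall 1 l ∧ l ⟨0, by omega⟩ = (m : ℤ)} ≃ Unit where
  toFun := fun _ => Unit.unit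
  invFun := fun _ => ⟨fun _ => (m : ℤ), ⟨⟨fun _ => by positivity, fun i hi => by omega⟩, rfl⟩⟩
  left_inv := fun x => by
    apply Subtype.ext
    funext i
    have hi : i = ⟨0, by omega⟩ := Subsingleton.elim _ _
    rw [hi]
    exact x.2.2.symm
  right_inv := fun _ => rfl

def snocEquiv (n : ℕ) (hn : 1 ≤ n) (m : ℤ) :
    {l : Fin (n + 1) → ℤ // IsLectureHall (n + 1) l ∧ l ⟨n, by omega⟩ = m} ≃
    {l' : Fin n → ℤ // IsLectureHall n l' ∧
      ((n : ℤ) + 1) * l' ⟨n - 1, by omega⟩ ≤ (n : ℤ) * m} where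
  toFun := fun x => ⟨fun i => x.1 i.castSucc, by
    obtain ⟨hl, hm⟩ := x.2
    constructor
    · constructor
      · intro h; exact hl.1 (by omega)
      · intro i hi
        exact hl.2 i (by omega)
    · have h2 := hl.2 (n - 1) (by omega)
      have hidx : (⟨n - 1 + 1, by omega⟩ : Fin (n + 1)) = ⟨n, by omega⟩ := by
        apply Fin.ext; simp; omega
      rw [hidx, hm] at h2
      have hc : ((n - 1 : ℕ) : ℤ) = (n : ℤ) - 1 := by omega
      simp only [hc] at h2
      have hidx2 : (⟨n - 1, by omega⟩ : Fin n).castSucc = ⟨n - 1, by omega⟩ := by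
        apply Fin.ext; simp
      show ((n : ℤ) + 1) * x.1 ((⟨n - 1, by omega⟩ : Fin n).castSucc) ≤ (n : ℤ) * m
      rw [hidx2]
      linarith⟩
  invFun := fun x => ⟨Fin.snoc x.1 m, by
    obtain ⟨hl', hb⟩ := x.2
    refine ⟨⟨?_, ?_⟩, ?_⟩
    · intro h
      have : (⟨0, h⟩ : Fin (n + 1)) = (⟨0, by omega⟩ : Fin n).castSucc := by
        apply Fin.ext; simp
      rw [this, Fin.snoc_castSucc]
      exact hl'.1 (by omega)
    · intro i hi
      by_cases hi' : i + 1 < n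
      · have e1 : (⟨i + 1, hi⟩ : Fin (n + 1)) = (⟨i + 1, hi'⟩ : Fin n).castSucc := by
          apply Fin.ext; simp
        have e2 : (⟨i, by omega⟩ : Fin (n + 1)) = (⟨i, by omega⟩ : Fin n).castSucc := by
          apply Fin.ext; simp
        rw [e1, e2, Fin.snoc_castSucc, Fin.snoc_castSucc]
        exact hl'.2 i hi'
      · have hin : i = n - 1 := by omega
        have e1 : (⟨i + 1, hi⟩ : Fin (n + 1)) = Fin.last n := by
          apply Fin.ext; simp; omega
        have e2 : (⟨i, by omega⟩ : Fin (n + 1)) = (⟨n - 1, by omega⟩ : Fin n).castSucc := by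
          apply Fin.ext; simp; omega
        rw [e1, e2, Fin.snoc_last, Fin.snoc_castSucc]
        have hc : (i : ℤ) = (n : ℤ) - 1 := by omega
        simp only [hc]
        linarith
    · have : (⟨n, by omega⟩ : Fin (n + 1)) = Fin.last n := by
        apply Fin.ext; simp
      rw [this, Fin.snoc_last]⟩
  left_inv := fun x => by
    apply Subtype.ext
    funext i
    induction i using Fin.lastCases with
    | last =>
      simp only [Fin.snoc_last]
      exact x.2.2.symm
    | cast j =>
      simp only [Fin.snoc_castSucc]
  right_inv := fun x => by
    apply Subtype.ext
    funext i
    simp only [Fin.snoc_castSucc]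

def sliceEquiv (n c N : ℕ) (hn : 1 ≤ n) (C : ℤ → Prop)
    (hC : ∀ x : ℤ, 0 ≤ x → (C x ↔ (c : ℤ) ≤ x ∧ x < (c : ℤ) + N)) :
    {l : Fin n → ℤ // IsLectureHall n l ∧ C (l ⟨n - 1, by omega⟩)} ≃
    Σ _k : Fin N, {l : Fin n → ℤ // IsLectureHall n l ∧
      l ⟨n - 1, by omega⟩ = ((c + _k.val : ℕ) : ℤ)} where
  toFun := fun x =>
    ⟨⟨(x.1 ⟨n - 1, by omega⟩ - c).toNat, by
      have h0 := x.2.1.nonneg_s12 (n - 1) (by omega)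
      have h1 := (hC _ h0).mp x.2.2
      omega⟩,
     ⟨x.1, x.2.1, by
      have h0 := x.2.1.nonneg_s12 (n - 1) (by omega)
      have h1 := (hC _ h0).mp x.2.2
      push_cast
      omega⟩⟩
  invFun := fun y => ⟨y.2.1, y.2.2.1, by
    have h0 := y.2.2.1.nonneg_s12 (n - 1) (by omega)
    refine (hC _ h0).mpr ?_
    rw [y.2.2.2]
    have hk := y.1.2
    push_cast
    omega⟩
  left_inv := fun x => rfl
  right_inv := fun y => by
    refine Sigma.subtype_ext (Fin.ext ?_) rfl
    have hv := y.2.2.2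
    simp only [hv]
    have hk := y.1.2
    push_cast
    omega

/-! ### The main counting lemma -/

lemma card_last (n : ℕ) (hn : 1 ≤ n) :
    ∀ m : ℕ,
      Nat.card {l : Fin n → ℤ // IsLectureHall n l ∧
        l ⟨n - 1, by omega⟩ = (m : ℤ)} = gcount n m ∧
      Finite {l : Fin n → ℤ // IsLectureHall n l ∧ l ⟨n - 1, by omega⟩ = (m : ℤ)} := by
  induction n, hn using Nat.le_induction with
  | base =>
    intro m
    constructor
    · rw [Nat.card_congr (baseEquiv m)]
      have : gcount 1 m = 1 := by
        unfold gcount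
        simp
      rw [this]
      simp
    · exact Finite.of_equiv _ (baseEquiv m).symm
  | succ n hn ih =>
    intro m
    -- set up the arithmetic data
    obtain ⟨A, hA⟩ : ∃ A, A = (m + n) / (n + 1) := ⟨_, rfl⟩
    have hmod := Nat.div_add_mod (m + n) (n + 1)
    have hmlt := Nat.mod_lt (m + n) (show 0 < n + 1 by omega)
    have h1 : (n + 1) * A ≤ m + n := by
      rw [hA]; omega
    have h2 : m + n < (n + 1) * A + (n + 1) := by
      rw [hA]; omega
    have hm2 : m ≤ (n + 1) * A := by linarith
    obtain ⟨B, hB1, hB2⟩ : ∃ B, m + B = (n + 1) * A ∧ B ≤ n := by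
      refine ⟨(n + 1) * A - m, Nat.add_sub_cancel' hm2, ?_⟩
      rw [Nat.sub_le_iff_le_add]; linarith
    have hBA : B ≤ n * A := by
      rcases Nat.eq_zero_or_pos A with hA0 | hA0
      · rw [hA0] at hB1 ⊢; omega
      · calc B ≤ n := hB2
          _ ≤ n * A := Nat.le_mul_of_pos_right n hA0
    obtain ⟨K, hK1⟩ : ∃ K, K + B = n * A := ⟨n * A - B, Nat.sub_add_cancel hBA⟩
    have hK2 : n * m = (n + 1) * K + B := by
      have e1 : n * m + n * B = n * ((n + 1) * A) := by rw [← Nat.mul_add, hB1]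
      have e2 : (n + 1) * K + (n + 1) * B = (n + 1) * (n * A) := by rw [← Nat.mul_add, hK1]
      have e3 : n * ((n + 1) * A) = (n + 1) * (n * A) := by ring
      have e4 : (n + 1) * B = n * B + B := by ring
      linarith
    have hM : n * m / (n + 1) = K := by
      rw [hK2, Nat.mul_add_div (by omega), Nat.div_eq_of_lt (by omega)]
      omega
    -- characterization of the slice condition
    have hd1 : (n + 1) * K ≤ n * m := by linarith
    have hd2 : n * m < (n + 1) * K + (n + 1) := by linarith
    have hC : ∀ x : ℤ, 0 ≤ x →
        (((n : ℤ) + 1) * x ≤ (n : ℤ) * (m : ℤ) ↔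
          ((0 : ℕ) : ℤ) ≤ x ∧ x < ((0 : ℕ) : ℤ) + ((K + 1 : ℕ) : ℤ)) := by
      intro x hx
      have hd1' : ((n : ℤ) + 1) * (K : ℤ) ≤ (n : ℤ) * (m : ℤ) := by exact_mod_cast hd1
      have hd2' : (n : ℤ) * (m : ℤ) < ((n : ℤ) + 1) * (K : ℤ) + ((n : ℤ) + 1) := by
        exact_mod_cast hd2
      constructor
      · intro h
        refine ⟨by push_cast; omega, ?_⟩
        push_cast
        by_contra hcon
        push_neg at hcon
        have : ((n : ℤ) + 1) * ((K : ℤ) + 1) ≤ ((n : ℤ) + 1) * x :=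
          mul_le_mul_of_nonneg_left (by linarith) (by positivity)
        nlinarith
      · rintro ⟨h0, hlt⟩
        have hxK : x ≤ (K : ℤ) := by push_cast at hlt; omega
        have : ((n : ℤ) + 1) * x ≤ ((n : ℤ) + 1) * (K : ℤ) :=
          mul_le_mul_of_nonneg_left hxK (by positivity)
        linarith
    -- the equivalence chain
    haveI hfin : ∀ k : Fin (K + 1),
        Finite {l : Fin n → ℤ // IsLectureHall n l ∧
          l ⟨n - 1, by omega⟩ = ((0 + k.val : ℕ) : ℤ)} := fun k => (ih (0 + k.val)).2
    have e := (snocEquiv n hn (m : ℤ)).trans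
      (sliceEquiv n 0 (K + 1) hn
        (fun x => ((n : ℤ) + 1) * x ≤ (n : ℤ) * (m : ℤ)) hC)
    have hcard : Nat.card {l : Fin (n + 1) → ℤ // IsLectureHall (n + 1) l ∧
        l ⟨n + 1 - 1, by omega⟩ = (m : ℤ)} = ∑ k ∈ Finset.range (K + 1), gcount n k := by
      refine (Nat.card_congr e).trans ?_
      rw [my_card_sigma]
      have : ∀ k : Fin (K + 1),
          Nat.card {l : Fin n → ℤ // IsLectureHall n l ∧
            l ⟨n - 1, by omega⟩ = ((0 + k.val : ℕ) : ℤ)} = gcount n k.val := by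
        intro k
        have := (ih (0 + k.val)).1
        simpa using this
      rw [Finset.sum_congr rfl (fun k _ => this k)]
      exact Fin.sum_univ_eq_sum_range (fun k => gcount n k) (K + 1)
    constructor
    · rw [hcard]
      clear hcard e hfin hC ih
      -- now the algebra
      by_cases hBn : B + 1 ≤ n
      · rw [gcount_sum' hn hBn hK1]
        have hg := @gcount_eq' (n + 1) A B m (by omega) (by omega) hB1
        rw [hg]
        have hexp : n + 1 - 1 - B = n - B := by omega
        rw [hexp, mul_comm]
      · have hBn' : B = n := by omega
        have hA1 : 1 ≤ A := by
          rcases Nat.eq_zero_or_pos A with hA0 | hA0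
          · exfalso; rw [hA0, Nat.mul_zero] at hK1; omega
          · exact hA0
        obtain ⟨A', rfl⟩ : ∃ A', A = A' + 1 := ⟨A - 1, by omega⟩
        have hK' : K + 0 = n * A' := by
          have : n * (A' + 1) = n * A' + n := by ring
          omega
        rw [gcount_sum' hn (by omega) hK']
        have hg := @gcount_eq' (n + 1) (A' + 1) n m (by omega) (by omega)
          (by rw [← hB1, hBn'])
        rw [hg]
        have hexp : n + 1 - 1 - n = 0 := by omega
        rw [hexp, pow_zero, pow_zero, one_mul, one_mul]
        norm_num
    · exact Finite.of_equiv _ e.symm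

/-! ### Main theorem -/

/-- For `n ≥ 1` and `t ≥ 1`, the number of lecture hall partitions `λ ∈ ℤⁿ` with
`⌈λ_n / n⌉ = t` equals `(t+1)^n - t^n`; and the only lecture hall partition with
`⌈λ_n / n⌉ = 0` is `λ = 0`. -/
theorem lectureHall_ceil_grading_count (n t : ℕ) (hn : 1 ≤ n) (ht : 1 ≤ t) :
    Nat.card {l : Fin n → ℤ //
        IsLectureHall n l ∧ ⌈(l ⟨n - 1, by omega⟩ : ℚ) / (n : ℚ)⌉ = (t : ℤ)} =
      (t + 1) ^ n - t ^ n ∧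
    ∀ l : Fin n → ℤ, IsLectureHall n l →
      ⌈(l ⟨n - 1, by omega⟩ : ℚ) / (n : ℚ)⌉ = 0 → l = 0 := by
  have hnQ : (0 : ℚ) < (n : ℚ) := by positivity
  constructor
  · -- counting part
    have hC : ∀ x : ℤ, 0 ≤ x →
        ((⌈(x : ℚ) / (n : ℚ)⌉ = (t : ℤ)) ↔
          ((n * (t - 1) + 1 : ℕ) : ℤ) ≤ x ∧
            x < ((n * (t - 1) + 1 : ℕ) : ℤ) + ((n : ℕ) : ℤ)) := by
      intro x hx
      rw [Int.ceil_eq_iff, lt_div_iff₀ hnQ, div_le_iff₀ hnQ]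
      have hcast : ((n * (t - 1) + 1 : ℕ) : ℤ) = (n : ℤ) * (t : ℤ) - n + 1 := by
        have h' : ((t - 1 : ℕ) : ℤ) = (t : ℤ) - 1 := by omega
        push_cast [h']
        ring
      constructor
      · rintro ⟨hlo, hhi⟩
        have hlo' : ((t : ℤ) - 1) * n < x := by exact_mod_cast hlo
        have hhi' : x ≤ (t : ℤ) * n := by exact_mod_cast hhi
        constructor
        · rw [hcast]; linarith
        · rw [hcast]; push_cast; linarith
      · rintro ⟨hlo, hhi⟩
        rw [hcast] at hlo
        rw [hcast] at hhi
        push_cast at hhi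
        constructor
        · have h1 : ((t : ℤ) - 1) * n < x := by linarith
          exact_mod_cast h1
        · have h2 : x ≤ (t : ℤ) * n := by linarith
          exact_mod_cast h2
    haveI hfin : ∀ k : Fin n,
        Finite {l : Fin n → ℤ // IsLectureHall n l ∧
          l ⟨n - 1, by omega⟩ = ((n * (t - 1) + 1 + k.val : ℕ) : ℤ)} :=
      fun k => (card_last n hn (n * (t - 1) + 1 + k.val)).2
    have e := sliceEquiv n (n * (t - 1) + 1) n hn
      (fun x => ⌈(x : ℚ) / (n : ℚ)⌉ = (t : ℤ)) hC
    rw [Nat.card_congr e, my_card_sigma]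
    have hfib : ∀ k : Fin n,
        Nat.card {l : Fin n → ℤ // IsLectureHall n l ∧
          l ⟨n - 1, by omega⟩ = ((n * (t - 1) + 1 + k.val : ℕ) : ℤ)} =
        gcount n (n * (t - 1) + 1 + k.val) :=
      fun k => (card_last n hn (n * (t - 1) + 1 + k.val)).1
    rw [Finset.sum_congr rfl (fun k _ => hfib k)]
    have hsum : ∑ k : Fin n, gcount n (n * (t - 1) + 1 + k.val) =
        ∑ k ∈ Finset.range n, gcount n (n * (t - 1) + 1 + k) :=
      Fin.sum_univ_eq_sum_range (fun k => gcount n (n * (t - 1) + 1 + k)) n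
    rw [hsum]
    -- total sums
    have hG1 : ∑ k ∈ Finset.range (n * t + 1), gcount n k = (t + 1) ^ n := by
      have := gcount_sum' hn (n := n) (M := n * t) (a := t) (b := 0) (by omega) (by omega)
      simpa using this
    have hG2 : ∑ k ∈ Finset.range (n * (t - 1) + 1), gcount n k = t ^ n := by
      have := gcount_sum' hn (n := n) (M := n * (t - 1)) (a := t - 1) (b := 0)
        (by omega) (by omega)
      rw [this]
      have : t - 1 + 1 = t := by omega
      rw [this]
      simp
    have hsplit : n * t + 1 = (n * (t - 1) + 1) + n := by
      have : n * t = n * (t - 1) + n := by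
        rw [Nat.mul_sub, Nat.mul_one]
        have := Nat.le_mul_of_pos_right n (show 0 < t by omega)
        omega
      omega
    have htot := Finset.sum_range_add (fun k => gcount n k) (n * (t - 1) + 1) n
    rw [← hsplit, hG1, hG2] at htot
    have hle : t ^ n ≤ (t + 1) ^ n := Nat.pow_le_pow_left (by omega) n
    omega
  · -- zero part
    intro l hl hceil
    have h0 := hl.nonneg_s12 (n - 1) (by omega)
    have hle : l ⟨n - 1, by omega⟩ ≤ 0 := by
      rw [Int.ceil_eq_iff] at hceil
      obtain ⟨_, h⟩ := hceil
      have : ((l ⟨n - 1, by omega⟩ : ℤ) : ℚ) ≤ 0 := by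
        rw [div_le_iff₀ hnQ] at h
        simpa using h
      exact_mod_cast this
    exact hl.zero_of_last hn (by omega)
end
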